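/- Let (V, Q) be an algebraic closure system satisfying (I₀). Then the lattice D(V, Q) of decompositions is a complete sublattice of the partition lattice Part(V) if and only if Q satisfies (I₁): A, B ∈ Q with A ∩ B ≠ ∅ implies A ∪ B ∈ Q. -/

import Mathlib

variable {V : Type*}

/-- `Q` is a closure system on `V`: it contains `V` and is closed under
intersections of nonempty subfamilies. -/
def IsClosureSystem (Q : Set (Set V)) : Prop :=
  Set.univ ∈ Q ∧ ∀ F ⊆ Q, F.Nonempty → ⋂₀ F ∈ Q

/-- Algebraic: the union of any nonempty chain of closed sets is closed. -/
def IsAlgebraicSystem (Q : Set (Set V)) : Prop :=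
  ∀ C ⊆ Q, C.Nonempty → IsChain (· ⊆ ·) C → ⋃₀ C ∈ Q

/-- Condition (I₀): the empty set and all singletons are closed. -/
def CondI0 (Q : Set (Set V)) : Prop := ∅ ∈ Q ∧ ∀ x : V, {x} ∈ Q

/-- Condition (I₁): the union of two intersecting members is a member. -/
def CondI1 (Q : Set (Set V)) : Prop :=
  ∀ A ∈ Q, ∀ B ∈ Q, (A ∩ B).Nonempty → A ∪ B ∈ Q

/-- Condition (I₂): differences of properly overlapping members are members. -/
def CondI2 (Q : Set (Set V)) : Prop :=
  ∀ A ∈ Q, ∀ B ∈ Q, (A ∩ B).Nonempty → ¬ A ⊆ B → ¬ B ⊆ A → A \ B ∈ Q ∧ B \ A ∈ Q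

/-- An interval system: an algebraic closure system satisfying (I₀), (I₁), (I₂). -/
def IsIntervalSystem (Q : Set (Set V)) : Prop :=
  IsClosureSystem Q ∧ IsAlgebraicSystem Q ∧ CondI0 Q ∧ CondI1 Q ∧ CondI2 Q

/-- `A` is a strong set of the closure system `Q`. -/
def IsStrong (Q : Set (Set V)) (A : Set V) : Prop :=
  A ∈ Q ∧ ∀ B ∈ Q, (A ∩ B).Nonempty → A ⊆ B ∨ B ⊆ A

/-- A decomposition: a partition of `V` (coded as a setoid) all of whose
blocks belong to `Q`.  The refinement order on partitions corresponds to the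
order on `Setoid V` (finer below). -/
def IsDecomp (Q : Set (Set V)) (π : Setoid V) : Prop :=
  ∀ x : V, {y | π.r x y} ∈ Q

/-- The lattice `D(V,Q)` of decompositions, as a subtype of `Setoid V`
with the induced (refinement) partial order. -/
abbrev Decomp (Q : Set (Set V)) := {π : Setoid V // IsDecomp Q π}

/-!
For the "only if" direction, a member `A` of `Q` together with singletons forms the decomposition
with the single nontrivial block `A`; if `A` and `B` meet, the join of the two such decompositions
has `A ∪ B` as a block, which therefore lies in `Q`.

For the "if" direction, a block of a meet of decompositions is an intersection of blocks, hence
closed. For the join, fix `x` and, by Zorn's lemma (algebraicity), a maximal closed set `M ∋ x`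
inside the join class `C` of `x`. By (I₁) and maximality, `M` absorbs every block of every
decomposition in the family that it meets, so `M` is saturated for the join and `M = C`.
-/

theorem IsClosureSystem.sInter_mem {Q : Set (Set V)} (hC : IsClosureSystem Q) {F : Set (Set V)}
    (hF : F ⊆ Q) : ⋂₀ F ∈ Q := by
  rcases F.eq_empty_or_nonempty with rfl | hne
  · simpa using hC.1
  · exact hC.2 F hF hne

theorem isDecomp_sInf {Q : Set (Set V)} (hC : IsClosureSystem Q) {S : Set (Setoid V)}
    (hS : ∀ π ∈ S, IsDecomp Q π) : IsDecomp Q (sInf S) := by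
  intro x
  have hclass : {y | (sInf S).r x y} = ⋂₀ ((fun π : Setoid V => {y | π.r x y}) '' S) := by
    ext y
    simp [Setoid.sInf_iff]
  rw [hclass]
  exact hC.sInter_mem (by rintro _ ⟨π, hπ, rfl⟩; exact hS π hπ x)

theorem IsAlgebraicSystem.exists_maximal {Q : Set (Set V)} (hA : IsAlgebraicSystem Q) {x : V}
    (hx : {x} ∈ Q) {C : Set V} (hxC : x ∈ C) :
    ∃ M, Maximal (fun B => B ∈ Q ∧ x ∈ B ∧ B ⊆ C) M := by
  obtain ⟨M, -, hM⟩ := zorn_subset_nonempty {B | B ∈ Q ∧ x ∈ B ∧ B ⊆ C}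
    (fun c hc hchain hne => ⟨⋃₀ c,
      ⟨hA c (fun B hB => (hc hB).1) hne hchain,
        let ⟨B, hB⟩ := hne; ⟨B, hB, (hc hB).2.1⟩,
        Set.sUnion_subset fun B hB => (hc hB).2.2⟩,
      fun _ => Set.subset_sUnion_of_mem⟩)
    {x} ⟨hx, rfl, Set.singleton_subset_iff.2 hxC⟩
  exact ⟨M, hM⟩

theorem Setoid.mem_of_sSup_rel {S : Set (Setoid V)} {M : Set V}
    (hM : ∀ π ∈ S, ∀ ⦃z y⦄, π.r z y → z ∈ M → y ∈ M) {x y : V} (hxy : (sSup S).r x y)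
    (hx : x ∈ M) : y ∈ M := by
  have hle : sSup S ≤ Setoid.ker (· ∈ M) :=
    sSup_le fun π hπ z y hzy => propext ⟨hM π hπ hzy, hM π hπ (π.symm' hzy)⟩
  exact (Setoid.ker_def.1 (hle hxy)) ▸ hx

theorem isDecomp_sSup {Q : Set (Set V)} (hA : IsAlgebraicSystem Q) (hsingle : ∀ x : V, {x} ∈ Q)
    (h1 : CondI1 Q) {S : Set (Setoid V)} (hS : ∀ π ∈ S, IsDecomp Q π) :
    IsDecomp Q (sSup S) := by
  intro x
  set C := {y | (sSup S).r x y}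
  obtain ⟨M, hM⟩ := hA.exists_maximal (hsingle x) (show x ∈ C from (sSup S).refl' x)
  obtain ⟨hMQ, hxM, hMC⟩ := hM.prop
  have hsaturated : ∀ π ∈ S, ∀ ⦃z y⦄, π.r z y → z ∈ M → y ∈ M := by
    intro π hπ z y hzy hzM
    have hblock : {w | π.r z w} ⊆ C := fun w hw => (sSup S).trans' (hMC hzM) (le_sSup hπ hw)
    have hunion : M ∪ {w | π.r z w} ⊆ M :=
      hM.2 ⟨h1 M hMQ _ (hS π hπ z) ⟨z, hzM, π.refl' z⟩, Or.inl hxM,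
        Set.union_subset hMC hblock⟩ Set.subset_union_left
    exact hunion (Or.inr hzy)
  have hCM : C = M :=
    Set.Subset.antisymm (fun y hy => Setoid.mem_of_sSup_rel hsaturated hy hxM) hMC
  rwa [hCM]

def blockSetoid (A : Set V) : Setoid V where
  r x y := x = y ∨ x ∈ A ∧ y ∈ A
  iseqv :=
    ⟨fun _ => Or.inl rfl, fun h => h.imp Eq.symm And.symm, fun h₁ h₂ => by
      rcases h₁ with rfl | h₁ <;> rcases h₂ with rfl | h₂ <;> tauto⟩

theorem blockSetoid_class_of_mem {A : Set V} {x : V} (hx : x ∈ A) :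
    {y | (blockSetoid A).r x y} = A := by
  ext y
  simp only [Set.mem_ofPred_eq]
  constructor
  · rintro (rfl | ⟨-, hy⟩) <;> assumption
  · exact fun hy => Or.inr ⟨hx, hy⟩

theorem blockSetoid_class_of_notMem {A : Set V} {x : V} (hx : x ∉ A) :
    {y | (blockSetoid A).r x y} = {x} := by
  ext y
  simp only [Set.mem_ofPred_eq, Set.mem_singleton_iff]
  constructor
  · rintro (rfl | ⟨hx', -⟩)
    exacts [rfl, absurd hx' hx]
  · exact fun hy => Or.inl hy.symm

theorem isDecomp_blockSetoid {Q : Set (Set V)} (hsingle : ∀ x : V, {x} ∈ Q) {A : Set V}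
    (hA : A ∈ Q) : IsDecomp Q (blockSetoid A) := by
  intro x
  by_cases hx : x ∈ A
  · rwa [blockSetoid_class_of_mem hx]
  · rw [blockSetoid_class_of_notMem hx]
    exact hsingle x

theorem blockSetoid_mono {A B : Set V} (h : A ⊆ B) : blockSetoid A ≤ blockSetoid B :=
  fun _ _ hxy => hxy.imp_right fun hxy => ⟨h hxy.1, h hxy.2⟩

theorem blockSetoid_sup {A B : Set V} (hAB : (A ∩ B).Nonempty) :
    blockSetoid A ⊔ blockSetoid B = blockSetoid (A ∪ B) := by
  refine le_antisymm (sup_le (blockSetoid_mono Set.subset_union_left)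
    (blockSetoid_mono Set.subset_union_right)) ?_
  obtain ⟨z, hzA, hzB⟩ := hAB
  set π := blockSetoid A ⊔ blockSetoid B
  have hz : ∀ w ∈ A ∪ B, π.r w z := by
    rintro w (hw | hw)
    · exact le_sup_left (a := blockSetoid A) (Or.inr ⟨hw, hzA⟩)
    · exact le_sup_right (b := blockSetoid B) (Or.inr ⟨hw, hzB⟩)
  rintro x y (rfl | ⟨hx, hy⟩)
  exacts [π.refl' x, π.trans' (hz x hx) (π.symm' (hz y hy))]

theorem condI1_of_isDecomp_sup {Q : Set (Set V)} (hsingle : ∀ x : V, {x} ∈ Q)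
    (hsup : ∀ π₁ π₂, IsDecomp Q π₁ → IsDecomp Q π₂ → IsDecomp Q (π₁ ⊔ π₂)) : CondI1 Q := by
  intro A hA B hB hAB
  have hdecomp := hsup _ _ (isDecomp_blockSetoid hsingle hA) (isDecomp_blockSetoid hsingle hB)
  rw [blockSetoid_sup hAB] at hdecomp
  obtain ⟨z, hzA, -⟩ := hAB
  rw [← blockSetoid_class_of_mem (Set.mem_union_left B hzA)]
  exact hdecomp z

theorem stmt5 (Q : Set (Set V)) (hC : IsClosureSystem Q) (hA : IsAlgebraicSystem Q)
    (h0 : CondI0 Q) :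
    (∀ S : Set (Setoid V), (∀ π ∈ S, IsDecomp Q π) →
        IsDecomp Q (sSup S) ∧ IsDecomp Q (sInf S)) ↔ CondI1 Q := by
  refine ⟨fun h => condI1_of_isDecomp_sup h0.2 fun π₁ π₂ h₁ h₂ => ?_,
    fun h1 S hS => ⟨isDecomp_sSup hA h0.2 h1 hS, isDecomp_sInf hC hS⟩⟩
  rw [← sSup_pair]
  exact (h {π₁, π₂} (by rintro π (rfl | rfl) <;> assumption)).1
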